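/- arXiv:2206.10432 — 2 statements merged into one kernel-verified Lean document; each statement's English description precedes it below -/
import Mathlib

section
/- Let p be a prime, let n, k be natural numbers with k ≤ n, and let M be a subspace of (ℤ/p)ⁿ of dimension at least k. Then there exists a vector v ∈ M that has at least k coordinates equal to 1. -/
/-!
The coordinate functionals restricted to `M` span the dual of `M`, so `dim M` of them are
linearly independent. Linearly independent functionals can be prescribed the value `1`
simultaneously by a vector of the double dual, which is evaluation at some `v ∈ M`.
-/

open Module Submodule
open scoped Finset

variable {K V ι : Type*} [Field K]

theorem Submodule.span_range_proj_comp_subtype_eq_top [Finite ι] (M : Submodule K (ι → K)) :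
    span K (Set.range fun i => LinearMap.proj i ∘ₗ M.subtype) = ⊤ := by
  classical
  have : (fun i => LinearMap.proj i ∘ₗ M.subtype) =
      M.subtype.dualMap ∘ (Pi.basisFun K ι).dualBasis := by
    ext i v
    simp
  rw [this, Set.range_comp, span_image, Basis.span_eq, map_top, LinearMap.range_eq_top]
  exact LinearMap.dualMap_surjective_of_injective M.injective_subtype

theorem Module.Dual.exists_finrank_le_card_filter_apply_eq_one [AddCommGroup V] [Module K V]
    [FiniteDimensional K V] [Fintype ι] [DecidableEq K] (e : ι → Dual K V)
    (he : span K (Set.range e) = ⊤) :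
    ∃ v : V, finrank K V ≤ #{i | e i v = 1} := by
  classical
  obtain ⟨t, hte, ht_card, -, ht_indep⟩ := exists_finset_span_eq_linearIndepOn K (Set.range e)
  rw [he, finrank_top, Subspace.dual_finrank_eq] at ht_card
  obtain ⟨f, hf⟩ := exists_dual_forall_apply_eq_one ht_indep
  refine ⟨(evalEquiv K V).symm f, ?_⟩
  have ht_sub : t ⊆ Finset.image e {i | e i ((evalEquiv K V).symm f) = 1} := by
    intro φ hφ
    obtain ⟨i, rfl⟩ := hte hφ
    exact Finset.mem_image_of_mem e (by simpa using hf _ hφ)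
  calc finrank K V = #t := ht_card.symm
    _ ≤ _ := Finset.card_le_card ht_sub
    _ ≤ _ := Finset.card_image_le

theorem stmt5_general (p : ℕ) [Fact p.Prime] (n k : ℕ)
    (M : Submodule (ZMod p) (Fin n → ZMod p))
    (hM : k ≤ Module.finrank (ZMod p) M) :
    ∃ v ∈ M, k ≤ (Finset.univ.filter fun i : Fin n => v i = 1).card := by
  obtain ⟨v, hv⟩ := Dual.exists_finrank_le_card_filter_apply_eq_one _
    M.span_range_proj_comp_subtype_eq_top
  exact ⟨v, v.2, hM.trans hv⟩

theorem stmt5 (p : ℕ) [Fact p.Prime] (n k : ℕ) (hk : k ≤ n)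
    (M : Submodule (ZMod p) (Fin n → ZMod p))
    (hM : k ≤ Module.finrank (ZMod p) M) :
    ∃ v ∈ M, k ≤ (Finset.univ.filter fun i : Fin n => v i = 1).card :=
  stmt5_general p n k M hM
end

section
/- Let p be a prime, n, k natural numbers with k ≤ n, M a subspace of (ℤ/p)ⁿ of dimension at least k, and r a nonzero element of ℤ/p. Then there exists a vector c ∈ M with at least k coordinates equal to r. -/
open Finset

theorem stmt6 (p : ℕ) [Fact p.Prime] (n k : ℕ) (hk : k ≤ n)
    (M : Submodule (ZMod p) (Fin n → ZMod p))
    (hM : k ≤ Module.finrank (ZMod p) M) (r : ZMod p) (hr : r ≠ 0) :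
    ∃ c ∈ M, k ≤ (Finset.univ.filter fun i : Fin n => c i = r).card := by
  classical
  obtain ⟨c, hc, s, hs, hcard⟩ :
      ∃ c ∈ M, ∃ s : ZMod p, s ≠ 0 ∧
        k ≤ (Finset.univ.filter fun i : Fin n => c i = s).card := by
    set f : (Fin n → ZMod p) → ℕ := fun c =>
      ((univ : Finset (ZMod p)).filter (· ≠ 0)).sup
        (fun s => (univ.filter fun i : Fin n => c i = s).card) with hf
    have hSne : ((univ : Finset (ZMod p)).filter (· ≠ 0)).Nonempty :=
      ⟨1, by simp⟩
    obtain ⟨c, -, hmax⟩ :=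
      Finset.exists_max_image (univ : Finset M) (fun c => f c.val) ⟨0, mem_univ 0⟩
    have hkf : k ≤ f c.val := by
      by_contra hlt
      push_neg at hlt
      obtain ⟨s, hsmem, hseq⟩ := Finset.exists_mem_eq_sup _ hSne
        (fun s => (univ.filter fun i : Fin n => c.val i = s).card)
      have hs0 : s ≠ 0 := by simpa using hsmem
      set S : Finset (Fin n) := univ.filter fun i => c.val i = s with hS
      have hm : S.card < k := by
        have : f c.val = S.card := hseq
        omega
      let π : (Fin n → ZMod p) →ₗ[ZMod p] ({ i // i ∈ S } → ZMod p) :=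
        LinearMap.funLeft (ZMod p) (ZMod p) Subtype.val
      let ψ := π.comp M.subtype
      have hrange : Module.finrank (ZMod p) (LinearMap.range ψ) ≤ S.card := by
        calc Module.finrank (ZMod p) (LinearMap.range ψ)
            ≤ Module.finrank (ZMod p) ({ i // i ∈ S } → ZMod p) :=
              Submodule.finrank_le _
          _ = S.card := by
              rw [Module.finrank_fintype_fun_eq_card, Fintype.card_coe]
      have hrn := LinearMap.finrank_range_add_finrank_ker ψ
      have hMfr : Module.finrank (ZMod p) M =
          Module.finrank (ZMod p) (LinearMap.range ψ) +
            Module.finrank (ZMod p) (LinearMap.ker ψ) := hrn.symm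
      have hker : 0 < Module.finrank (ZMod p) (LinearMap.ker ψ) := by omega
      have hne : LinearMap.ker ψ ≠ ⊥ := by
        intro h
        rw [h, finrank_bot] at hker
        exact lt_irrefl 0 hker
      obtain ⟨x, hxker, hx0⟩ := (Submodule.ne_bot_iff _).mp hne
      have hxS : ∀ i, i ∈ S → x.val i = 0 := by
        intro i hi
        have h1 : ψ x = 0 := hxker
        have h2 := congrFun h1 ⟨i, hi⟩
        simpa [ψ, π, LinearMap.funLeft] using h2
      obtain ⟨j, hj⟩ : ∃ j, x.val j ≠ 0 := by
        by_contra h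
        push_neg at h
        exact hx0 (Subtype.ext (funext fun i => h i))
      have hjS : j ∉ S := fun hjmem => hj (hxS j hjmem)
      have hcj : c.val j ≠ s := by simpa [hS] using hjS
      set t := x.val j with ht
      set lam := (s - c.val j) * t⁻¹ with hlam
      set c' : Fin n → ZMod p := c.val + lam • x.val with hc'
      have hc'M : c' ∈ M := M.add_mem c.2 (M.smul_mem lam x.2)
      have hsub : insert j S ⊆ univ.filter fun i : Fin n => c' i = s := by
        intro i hi
        rcases Finset.mem_insert.mp hi with rfl | hiS
        · simp only [mem_filter, mem_univ, true_and]
          show c.val i + lam * x.val i = s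
          rw [hlam, mul_assoc, inv_mul_cancel₀ hj]
          ring
        · simp only [mem_filter, mem_univ, true_and]
          have h1 : c.val i = s := by simpa [hS] using hiS
          have h2 : x.val i = 0 := hxS i hiS
          show c.val i + lam * x.val i = s
          rw [h1, h2, mul_zero, add_zero]
      have hcard' : S.card + 1 ≤ (univ.filter fun i : Fin n => c' i = s).card := by
        have := Finset.card_le_card hsub
        rwa [Finset.card_insert_of_notMem hjS] at this
      have hle : (univ.filter fun i : Fin n => c' i = s).card ≤ f c' :=
        Finset.le_sup (f := fun s => (univ.filter fun i : Fin n => c' i = s).card) hsmem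
      have := hmax ⟨c', hc'M⟩ (mem_univ _)
      simp only at this
      have : f c' ≤ S.card := by
        have hfc : f c.val = S.card := hseq
        omega
      omega
    obtain ⟨s, hsmem, hseq⟩ := Finset.exists_mem_eq_sup _ hSne
      (fun s => (univ.filter fun i : Fin n => c.val i = s).card)
    have hs0 : s ≠ 0 := by simpa using hsmem
    refine ⟨c.val, c.2, s, hs0, ?_⟩
    have : f c.val = (univ.filter fun i : Fin n => c.val i = s).card := hseq
    omega
  refine ⟨(r * s⁻¹) • c, M.smul_mem _ hc, le_trans hcard (Finset.card_le_card ?_)⟩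
  intro i hi
  simp only [mem_filter, mem_univ, true_and] at hi ⊢
  rw [Pi.smul_apply, hi, smul_eq_mul, mul_assoc, inv_mul_cancel₀ hs, mul_one]
end
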